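/- arXiv:2409.14593 — 5 statements merged into one kernel-verified Lean document; each statement's English description precedes it below -/
import Mathlib

section
/- Let G be a mixed graph with topological order ≺ and X a vertex. A set C containing X with C ⊆ V^{≤X} is an ancestral c-component relative to X if and only if C is bidirected-connected in the induced subgraph G_{An(C)} and equals the c-component of X in G_{An(C)}, where An(C) is computed within V^{≤X}. -/
/-- A mixed graph: directed edges and (symmetric) bidirected edges. -/
structure MixedGraph (V : Type) where
  dir : V → V → Prop
  bi : V → V → Prop
  bi_symm : ∀ a b, bi a b → bi b a

namespace MixedGraph

variable {V : Type}

/-- `G.anc x y` : `x` is an ancestor of `y` (directed path, possibly trivial). -/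
def anc (G : MixedGraph V) : V → V → Prop := Relation.ReflTransGen G.dir

/-- Ancestors of a set (including the set itself). -/
def An (G : MixedGraph V) (S : Set V) : Set V := {v | ∃ s ∈ S, G.anc v s}

/-- A set is ancestral if it contains all ancestors of its elements. -/
def Ancestral (G : MixedGraph V) (S : Set V) : Prop := G.An S = S

/-- Descendants of a set (including the set itself). -/
def De (G : MixedGraph V) (S : Set V) : Set V := {v | ∃ s ∈ S, G.anc s v}

/-- `Pa(C)`: `C` together with the directed parents of members of `C`. -/
def Pa (G : MixedGraph V) (C : Set V) : Set V := C ∪ {p | ∃ c ∈ C, G.dir p c}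

/-- `Spo(C)`: vertices joined by a bidirected edge to some vertex of `C`. -/
def Spo (G : MixedGraph V) (C : Set V) : Set V := {y | ∃ c ∈ C, G.bi y c}

/-- Connectivity by a path of bidirected edges lying inside `S`. -/
def biConn (G : MixedGraph V) (S : Set V) : V → V → Prop :=
  Relation.ReflTransGen (fun a b => G.bi a b ∧ a ∈ S ∧ b ∈ S)

/-- The c-component of `x` in the induced subgraph on `S`. -/
def cc (G : MixedGraph V) (S : Set V) (x : V) : Set V := {y | G.biConn S x y}

/-- The ordering on `V` is a topological ordering of the directed part of `G`. -/
def TopoOrder (G : MixedGraph V) [LinearOrder V] : Prop := ∀ a b, G.dir a b → a < b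

/-- Ancestral c-component relative to `X` (w.r.t. the linear order on `V`). -/
def IsACC (G : MixedGraph V) [LinearOrder V] (X : V) (C : Set V) : Prop :=
  ∃ S : Set V, G.Ancestral S ∧ S ⊆ {y | y ≤ X} ∧ X ∈ S ∧ G.cc S X = C

/-- `S⁺ = V^{≤X} \ De(Spo(C) \ Pa(C))`. -/
def Splus (G : MixedGraph V) [LinearOrder V] (X : V) (C : Set V) : Set V :=
  {y | y ≤ X} \ G.De (G.Spo C \ G.Pa C)

end MixedGraph

namespace MixedGraph

lemma anc_le' {V : Type} [LinearOrder V] {G : MixedGraph V} (htopo : G.TopoOrder)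
    {a b : V} (h : G.anc a b) : a ≤ b := by
  induction h with
  | refl => exact le_refl _
  | tail _ h ih => exact ih.trans (le_of_lt (htopo _ _ h))

lemma biConn_mem' {V : Type} {G : MixedGraph V} {S : Set V} {x y : V}
    (h : G.biConn S x y) (hx : x ∈ S) : y ∈ S := by
  induction h with
  | refl => exact hx
  | tail _ h _ => exact h.2.2

lemma biConn_mono' {V : Type} {G : MixedGraph V} {S T : Set V} (hST : S ⊆ T) {x y : V}
    (h : G.biConn S x y) : G.biConn T x y := by
  induction h with
  | refl => exact Relation.ReflTransGen.refl
  | tail _ h ih => exact ih.tail ⟨h.1, hST h.2.1, hST h.2.2⟩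

end MixedGraph

/-- Characterization: a set `C ∋ X` with `C ⊆ V^{≤X}` is an ancestral c-component
relative to `X` iff `C` is bidirected-connected in the induced subgraph on
`An(C)` (computed within `V^{≤X}`) and equals the c-component of `X` there. -/
theorem stmt6 {V : Type} [LinearOrder V] (G : MixedGraph V) (htopo : G.TopoOrder)
    (X : V) (C : Set V) (hXC : X ∈ C) (hle : C ⊆ {y | y ≤ X}) :
    G.IsACC X C ↔
      ((∀ c ∈ C, G.biConn (G.An C ∩ {y | y ≤ X}) X c) ∧
        G.cc (G.An C ∩ {y | y ≤ X}) X = C) := by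
  constructor
  · rintro ⟨S, hanc, hSle, hXS, rfl⟩
    set A : Set V := G.An (G.cc S X) ∩ {y | y ≤ X} with hA
    have hCA : G.cc S X ⊆ A := fun c hc =>
      ⟨⟨c, hc, Relation.ReflTransGen.refl⟩, hle hc⟩
    have hAS : A ⊆ S := by
      rintro v ⟨⟨s, hs, hvs⟩, _⟩
      have hsS : s ∈ S := MixedGraph.biConn_mem' hs hXS
      have : v ∈ G.An S := ⟨s, hsS, hvs⟩
      rwa [hanc] at this
    -- cc S X ⊆ cc A X
    have key : ∀ y, G.biConn S X y → G.biConn A X y := by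
      intro y hy
      induction hy with
      | refl => exact Relation.ReflTransGen.refl
      | tail hpre h ih =>
        rename_i b c _
        exact ih.tail ⟨h.1, hCA hpre, hCA (hpre.tail h)⟩
    have hccA : G.cc A X = G.cc S X := by
      ext y
      exact ⟨fun h => MixedGraph.biConn_mono' hAS h, fun h => key y h⟩
    exact ⟨fun c hc => hccA.ge hc, hccA⟩
  · rintro ⟨-, hcc⟩
    refine ⟨G.An C ∩ {y | y ≤ X}, ?_, fun y hy => hy.2, ⟨⟨X, hXC, Relation.ReflTransGen.refl⟩, le_refl X⟩, hcc⟩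
    ext v
    constructor
    · rintro ⟨s, ⟨⟨c, hc, hsc⟩, hsX⟩, hvs⟩
      exact ⟨⟨c, hc, hvs.trans hsc⟩, (MixedGraph.anc_le' htopo hvs).trans hsX⟩
    · intro hv
      exact ⟨v, hv, Relation.ReflTransGen.refl⟩
end

section
/- For distinct ancestral c-components C₁ ≠ C₂ relative to the same vertex X, the induced conditional independence statements differ: either Pa(C₁) \ {X} ≠ Pa(C₂) \ {X}, or the sets S⁺ᵢ \ Pa(Cᵢ) differ, where S⁺ᵢ = V^{≤X} \ De(Spo(Cᵢ) \ Pa(Cᵢ)). In other words, the map from ancestral c-components relative to X to pairs (W, Z) with W = S⁺ \ Pa(C) and Z = Pa(C) \ {X} is injective. -/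
namespace MixedGraph

lemma cc_subset_S' (G : MixedGraph V) (S : Set V) (x : V) (hx : x ∈ S) :
    G.cc S x ⊆ S := by
  intro y hy
  induction hy with
  | refl => exact hx
  | tail _ h _ => exact h.2.2

lemma pa_subset' (G : MixedGraph V) {S : Set V} (hS : G.Ancestral S) {C : Set V}
    (hC : C ⊆ S) : G.Pa C ⊆ S := by
  intro p hp
  rcases hp with hp | ⟨c, hc, hdir⟩
  · exact hC hp
  · have : p ∈ G.An S := ⟨c, hC hc, Relation.ReflTransGen.single hdir⟩
    rwa [hS] at this

lemma cc_pa' (G : MixedGraph V) {S : Set V} (hS : G.Ancestral S) {x : V} (hx : x ∈ S) :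
    G.cc (G.Pa (G.cc S x)) x = G.cc S x := by
  have hCS : G.cc S x ⊆ S := G.cc_subset_S' S x hx
  have hPaS : G.Pa (G.cc S x) ⊆ S := G.pa_subset' hS hCS
  apply Set.Subset.antisymm
  · intro y hy
    show G.biConn S x y
    induction hy with
    | refl => exact Relation.ReflTransGen.refl
    | tail _ h ih => exact ih.tail ⟨h.1, hPaS h.2.1, hPaS h.2.2⟩
  · intro y hy
    show G.biConn (G.Pa (G.cc S x)) x y
    induction hy with
    | refl => exact Relation.ReflTransGen.refl
    | tail hab h ih =>
      exact ih.tail ⟨h.1, Or.inl hab, Or.inl (Relation.ReflTransGen.tail hab h)⟩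

end MixedGraph

/-- The map from ancestral c-components relative to `X` to the pairs
`(W, Z) = (S⁺ \ Pa(C), Pa(C) \ {X})` is injective. -/
theorem stmt7 {V : Type} [LinearOrder V] (G : MixedGraph V) (htopo : G.TopoOrder)
    (X : V) (C₁ C₂ : Set V) (h₁ : G.IsACC X C₁) (h₂ : G.IsACC X C₂)
    (hW : G.Splus X C₁ \ G.Pa C₁ = G.Splus X C₂ \ G.Pa C₂)
    (hZ : G.Pa C₁ \ {X} = G.Pa C₂ \ {X}) :
    C₁ = C₂ := by
  obtain ⟨S₁, hA₁, _, hX₁, rfl⟩ := h₁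
  obtain ⟨S₂, hA₂, _, hX₂, rfl⟩ := h₂
  have hX1 : X ∈ G.Pa (G.cc S₁ X) := Or.inl Relation.ReflTransGen.refl
  have hX2 : X ∈ G.Pa (G.cc S₂ X) := Or.inl Relation.ReflTransGen.refl
  have hPa : G.Pa (G.cc S₁ X) = G.Pa (G.cc S₂ X) := by
    ext v
    by_cases hv : v = X
    · subst hv; simp [hX1, hX2]
    · constructor
      · intro h
        have : v ∈ G.Pa (G.cc S₂ X) \ {X} := hZ ▸ ⟨h, hv⟩
        exact this.1
      · intro h
        have : v ∈ G.Pa (G.cc S₁ X) \ {X} := hZ.symm ▸ ⟨h, hv⟩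
        exact this.1
  calc G.cc S₁ X = G.cc (G.Pa (G.cc S₁ X)) X := (G.cc_pa' hA₁ hX₁).symm
    _ = G.cc (G.Pa (G.cc S₂ X)) X := by rw [hPa]
    _ = G.cc S₂ X := G.cc_pa' hA₂ hX₂
end

section
/- There exists a family of mixed graphs G_n on 2n vertices and consistent topological orderings such that the number of distinct ancestral c-components (over all vertices) is at least 2^n. -/
/-- There is a family of mixed graphs on `2n` vertices, with consistent topological
orderings, having at least `2^n` ancestral c-components in total. -/
theorem stmt9 : ∀ n : ℕ, 1 ≤ n → ∃ G : MixedGraph (Fin (2 * n)),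
    G.TopoOrder ∧
    2 ^ n ≤ Set.ncard {p : Fin (2 * n) × Set (Fin (2 * n)) | G.IsACC p.1 p.2} := by
  intro n hn
  have h2n : 0 < 2 * n := by omega
  -- the graph: no directed edges, complete bidirected graph
  refine ⟨⟨fun _ _ => False, fun a b => a ≠ b, fun a b h => h.symm⟩, fun a b h => h.elim, ?_⟩
  set G : MixedGraph (Fin (2 * n)) :=
    ⟨fun _ _ => False, fun a b => a ≠ b, fun a b h => h.symm⟩ with hG
  have hanc : ∀ a b : Fin (2 * n), G.anc a b ↔ a = b := by
    intro a b
    constructor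
    · intro h
      induction h with
      | refl => rfl
      | tail h1 h2 ih => exact h2.elim
    · rintro rfl; exact Relation.ReflTransGen.refl
  set top : Fin (2 * n) := ⟨2 * n - 1, by omega⟩ with htop
  have htople : ∀ a : Fin (2 * n), a ≤ top := by
    intro a; exact Fin.mk_le_mk.mpr (by omega)
  set toFin : Fin n → Fin (2 * n) := fun i => ⟨i.1, by omega⟩ with htoFin
  have htoFin_ne : ∀ i : Fin n, toFin i ≠ top := by
    intro i h
    have := congrArg Fin.val h
    simp only [toFin, top] at this
    omega
  have htoFin_inj : Function.Injective toFin := by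
    intro i j h
    have hval := congrArg Fin.val h
    exact Fin.ext hval
  set φ : (Fin n → Bool) → Fin (2 * n) × Set (Fin (2 * n)) :=
    fun b => (top, insert top (toFin '' {i | b i = true})) with hφ
  have hφinj : Function.Injective φ := by
    intro b1 b2 h
    have hs : insert top (toFin '' {i | b1 i = true})
        = insert top (toFin '' {i | b2 i = true}) := congrArg Prod.snd h
    funext i
    by_contra hne
    have hiff : (toFin i ∈ insert top (toFin '' {i | b1 i = true})) ↔
        (toFin i ∈ insert top (toFin '' {i | b2 i = true})) := by rw [hs]
    simp only [Set.mem_insert_iff, Set.mem_image, Set.mem_setOf_eq] at hiff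
    have h1 : (toFin i = top ∨ ∃ x, b1 x = true ∧ toFin x = toFin i) ↔ b1 i = true := by
      constructor
      · rintro (h | ⟨x, hx, hxe⟩)
        · exact absurd h (htoFin_ne i)
        · rwa [htoFin_inj hxe] at hx
      · intro h; exact Or.inr ⟨i, h, rfl⟩
    have h2 : (toFin i = top ∨ ∃ x, b2 x = true ∧ toFin x = toFin i) ↔ b2 i = true := by
      constructor
      · rintro (h | ⟨x, hx, hxe⟩)
        · exact absurd h (htoFin_ne i)
        · rwa [htoFin_inj hxe] at hx
      · intro h; exact Or.inr ⟨i, h, rfl⟩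
    rw [h1, h2] at hiff
    exact hne (by rw [Bool.eq_iff_iff]; exact hiff)
  have hmem : ∀ b, φ b ∈ {p : Fin (2 * n) × Set (Fin (2 * n)) | G.IsACC p.1 p.2} := by
    intro b
    set S : Set (Fin (2 * n)) := insert top (toFin '' {i | b i = true}) with hS
    refine ⟨S, ?_, fun y _ => htople y, Set.mem_insert _ _, ?_⟩
    · -- Ancestral
      ext v
      simp only [MixedGraph.An, Set.mem_setOf_eq]
      constructor
      · rintro ⟨s, hs, hvs⟩
        rw [hanc] at hvs
        exact hvs ▸ hs
      · intro hv; exact ⟨v, hv, Relation.ReflTransGen.refl⟩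
    · -- cc S top = S
      ext y
      simp only [MixedGraph.cc, Set.mem_setOf_eq]
      constructor
      · intro h
        induction h with
        | refl => exact Set.mem_insert _ _
        | tail h1 h2 ih => exact h2.2.2
      · intro hy
        by_cases hyt : y = top
        · rw [hyt]; exact Relation.ReflTransGen.refl
        · exact Relation.ReflTransGen.single ⟨fun h => hyt h.symm, Set.mem_insert _ _, hy⟩
  have hsub : Set.range φ ⊆ {p : Fin (2 * n) × Set (Fin (2 * n)) | G.IsACC p.1 p.2} := by
    rintro p ⟨b, rfl⟩; exact hmem b
  have hcard : (Set.range φ).ncard = 2 ^ n := by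
    rw [← Nat.card_coe_set_eq, Nat.card_range_of_injective hφinj]
    simp [Nat.card_eq_fintype_card]
  calc 2 ^ n = (Set.range φ).ncard := hcard.symm
    _ ≤ _ := Set.ncard_le_ncard hsub (Set.toFinite _)
end

section
/- In a mixed graph, for any vertex X with ancestral c-component C relative to X, every vertex Y in V^{≤X} that is a descendant of Spo(C) \ Pa(C) is d-connected to X given Pa(C) \ {X}; conversely every vertex in V^{≤X} \ (De(Spo(C) \ Pa(C)) ∪ Pa(C)) is d-separated from X given Pa(C) \ {X} in the induced subgraph on V^{≤X}. -/
namespace MixedGraph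

/-- `Reach G Z x w b` : there is a walk from `x` to `w` that is active given `Z`
(every non-collider outside `Z`, every collider an ancestor of `Z`), where `b`
records whether the final edge has an arrowhead at `w`. -/
inductive Reach {V : Type} (G : MixedGraph V) (Z : Set V) (x : V) : V → Bool → Prop
  | initTail (w : V) : G.dir w x → Reach G Z x w false
  | initHead (w : V) : G.dir x w → Reach G Z x w true
  | initBi (w : V) : G.bi x w → Reach G Z x w true
  | stepOutNC (v w : V) (b : Bool) : Reach G Z x v b → v ∉ Z → G.dir v w → Reach G Z x w true
  | stepInNC (v w : V) : Reach G Z x v false → v ∉ Z → G.dir w v → Reach G Z x w false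
  | stepInC (v w : V) : Reach G Z x v true → v ∈ G.An Z → G.dir w v → Reach G Z x w false
  | stepBiNC (v w : V) : Reach G Z x v false → v ∉ Z → G.bi v w → Reach G Z x w true
  | stepBiC (v w : V) : Reach G Z x v true → v ∈ G.An Z → G.bi v w → Reach G Z x w true

/-- `x` and `y` are d-connected given `Z`. -/
def dConn {V : Type} (G : MixedGraph V) (Z : Set V) (x y : V) : Prop :=
  ∃ b, Reach G Z x y b

/-- Induced subgraph of `G` on a vertex set `S`. -/
def induce {V : Type} (G : MixedGraph V) (S : Set V) : MixedGraph V where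
  dir a b := G.dir a b ∧ a ∈ S ∧ b ∈ S
  bi a b := G.bi a b ∧ a ∈ S ∧ b ∈ S
  bi_symm a b h := ⟨G.bi_symm a b h.1, h.2.2, h.2.1⟩

end MixedGraph

/-- For an ancestral c-component `C` relative to `X`: in the induced subgraph on
`V^{≤X}`, every `Y ∈ V^{≤X}` that is a descendant of `Spo(C) \ Pa(C)` is d-connected
to `X` given `Pa(C) \ {X}`, and every `Y ∈ V^{≤X} \ (De(Spo(C) \ Pa(C)) ∪ Pa(C))`
is d-separated from `X` given `Pa(C) \ {X}`. -/
theorem stmt11 {V : Type} [LinearOrder V] (G : MixedGraph V) (htopo : G.TopoOrder)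
    (X : V) (C : Set V) (hC : G.IsACC X C) :
    (∀ Y : V, Y ≤ X → Y ∈ G.De (G.Spo C \ G.Pa C) →
      (G.induce {y | y ≤ X}).dConn (G.Pa C \ {X}) X Y) ∧
    (∀ Y : V, Y ≤ X → Y ∉ G.De (G.Spo C \ G.Pa C) ∪ G.Pa C →
      ¬ (G.induce {y | y ≤ X}).dConn (G.Pa C \ {X}) X Y) := by
  obtain ⟨S, hSanc, hSle, hXS, hccC⟩ := hC
  set Z : Set V := G.Pa C \ {X} with hZdef
  set H := G.induce {y | y ≤ X} with hHdef
  -- topological order gives anc ⇒ ≤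
  have hancle : ∀ {a b : V}, G.anc a b → a ≤ b := by
    intro a b h
    induction h with
    | refl => exact le_refl _
    | tail _ h2 ih => exact ih.trans (htopo _ _ h2).le
  -- C ⊆ S
  have hCS : C ⊆ S := by
    intro c hc
    rw [← hccC] at hc
    induction hc with
    | refl => exact hXS
    | tail _ h2 _ => exact h2.2.2
  have hXC : X ∈ C := by rw [← hccC]; exact Relation.ReflTransGen.refl
  -- ancestrality: ancestors of members of S are in S
  have hmemS : ∀ {a b : V}, G.anc a b → b ∈ S → a ∈ S := by
    intro a b h hb
    have : a ∈ G.An S := ⟨b, hb, h⟩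
    rwa [hSanc] at this
  have hAS : G.Pa C ⊆ S := by
    rintro a (ha | ⟨c, hc, hdir⟩)
    · exact hCS ha
    · exact hmemS (Relation.ReflTransGen.single hdir) (hCS hc)
  have hAle : ∀ {a : V}, a ∈ G.Pa C → a ≤ X := fun ha => hSle (hAS ha)
  have hmemC : ∀ {c : V}, G.biConn S X c → c ∈ C := by
    intro c h; rw [← hccC]; exact h
  have hmemC' : ∀ {c : V}, c ∈ C → G.biConn S X c := by
    intro c h; rw [← hccC] at h; exact h
  have hSpoS : ∀ s ∈ G.Spo C, s ∈ S → s ∈ C := by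
    rintro s ⟨c, hc, hbi⟩ hsS
    exact hmemC ((hmemC' hc).tail ⟨G.bi_symm s c hbi, hCS hc, hsS⟩)
  -- descendants of Spo(C)\Pa(C) never meet Pa(C)
  have hDnotA : ∀ s ∈ G.Spo C \ G.Pa C, ∀ v, G.anc s v → v ∉ G.Pa C := by
    rintro s ⟨hsp, hsA⟩ v hanc hvA
    exact hsA (Or.inl (hSpoS s hsp (hmemS hanc (hAS hvA))))
  have hDAn : ∀ v ∈ G.De (G.Spo C \ G.Pa C), v ∉ G.An Z := by
    rintro v ⟨s, hs, hanc⟩ ⟨z, hz, hanc2⟩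
    exact hDnotA s hs z (hanc.trans hanc2) hz.1
  have hSpoDC : ∀ w ∈ G.Spo C, w ∈ G.De (G.Spo C \ G.Pa C) ∪ C := by
    intro w hw
    by_cases hwA : w ∈ G.Pa C
    · exact Or.inr (hSpoS w hw (hAS hwA))
    · exact Or.inl ⟨w, ⟨hw, hwA⟩, Relation.ReflTransGen.refl⟩
  have hnoXout : ∀ w, ¬ H.dir X w := by
    rintro w ⟨hd, _, hw⟩
    exact absurd (hw : w ≤ X) (not_le.2 (htopo X w hd))
  -- members of C not equal to X are in Z (hence in An Z)
  have hCZ : ∀ {c : V}, c ∈ C → c ≠ X → c ∈ Z := fun hc hne => ⟨Or.inl hc, hne⟩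
  have hZAn : ∀ {c : V}, c ∈ Z → c ∈ H.An Z := fun hc => ⟨_, hc, Relation.ReflTransGen.refl⟩
  have hHG : ∀ {a b : V}, H.anc a b → G.anc a b := by
    intro a b h
    induction h with
    | refl => exact Relation.ReflTransGen.refl
    | tail _ h2 ih => exact ih.tail h2.1
  have hDAnH : ∀ v ∈ G.De (G.Spo C \ G.Pa C), v ∉ H.An Z := by
    rintro v hv ⟨z, hz, h⟩
    exact hDAn v hv ⟨z, hz, hHG h⟩
  -- reach every member of C (with an arrowhead), or it is X itself
  have hPC : ∀ c, G.biConn S X c → c = X ∨ MixedGraph.Reach H Z X c true := by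
    intro c h
    induction h with
    | refl => exact Or.inl rfl
    | @tail v c h1 hstep ih =>
      obtain ⟨hbi, hvS, hcS⟩ := hstep
      right
      rcases ih with rfl | hr
      · exact MixedGraph.Reach.initBi c ⟨hbi, hSle hvS, hSle hcS⟩
      · by_cases hvX : v = X
        · subst hvX; exact MixedGraph.Reach.initBi c ⟨hbi, hSle hvS, hSle hcS⟩
        · exact MixedGraph.Reach.stepBiC v c hr (hZAn (hCZ (hmemC h1) hvX))
            ⟨hbi, hSle hvS, hSle hcS⟩
  constructor
  · -- d-connection part
    rintro Y hY ⟨s, hsmem, hancsY⟩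
    have hsX : s ≤ X := (hancle hancsY).trans hY
    obtain ⟨c, hcC, hbisc⟩ := hsmem.1
    have hbc : G.biConn S X c := hmemC' hcC
    have hrs : MixedGraph.Reach H Z X s true := by
      by_cases hcX : c = X
      · exact MixedGraph.Reach.initBi s ⟨G.bi_symm s X (hcX ▸ hbisc), le_refl X, hsX⟩
      · rcases hPC c hbc with rfl | hr
        · exact absurd rfl hcX
        · exact MixedGraph.Reach.stepBiC c s hr (hZAn (hCZ hcC hcX))
            ⟨G.bi_symm s c hbisc, hSle (hCS hcC), hsX⟩
    have hclimb : ∀ w, G.anc s w → w ≤ X → MixedGraph.Reach H Z X w true := by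
      intro w h
      induction h with
      | refl => exact fun _ => hrs
      | @tail v w h1 hd ih =>
        intro hwX
        have hvX : v ≤ X := (htopo _ _ hd).le.trans hwX
        exact MixedGraph.Reach.stepOutNC v w true (ih hvX)
          (fun hvZ => hDnotA s hsmem v h1 hvZ.1) ⟨hd, hvX, hwX⟩
    exact ⟨true, hclimb Y hancsY hY⟩
  · -- separation part: invariant on Reach
    have hinv : ∀ w b, MixedGraph.Reach H Z X w b →
        (b = true → w ∈ G.De (G.Spo C \ G.Pa C) ∪ C) ∧ (b = false → w ∈ Z) := by
      intro w b h
      induction h with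
      | initTail w hd =>
        refine ⟨fun h => by simp at h, fun _ => ⟨Or.inr ⟨X, hXC, hd.1⟩, fun hwX => ?_⟩⟩
        rw [Set.mem_singleton_iff] at hwX
        exact absurd (htopo w X hd.1) (by simp [hwX])
      | initHead w hd => exact absurd hd (hnoXout w)
      | initBi w hb =>
        exact ⟨fun _ => hSpoDC w ⟨X, hXC, G.bi_symm X w hb.1⟩, fun h => by simp at h⟩
      | stepOutNC v w b hr hvZ hd ih =>
        refine ⟨fun _ => ?_, fun h => by simp at h⟩
        cases b with
        | false => exact absurd (ih.2 rfl) hvZ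
        | true =>
          rcases ih.1 rfl with ⟨s, hs, hanc⟩ | hvC
          · exact Or.inl ⟨s, hs, hanc.tail hd.1⟩
          · have hvX : v = X := by
              by_contra hne
              exact hvZ (hCZ hvC hne)
            exact absurd hd (hvX ▸ hnoXout w)
      | stepInNC v w hr hvZ hd ih => exact absurd (ih.2 rfl) hvZ
      | stepInC v w hr hvAn hd ih =>
        refine ⟨fun h => by simp at h, fun _ => ?_⟩
        rcases ih.1 rfl with hvD | hvC
        · exact absurd hvAn (hDAnH v hvD)
        · refine ⟨Or.inr ⟨v, hvC, hd.1⟩, fun hwX => ?_⟩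
          have : w < X := lt_of_lt_of_le (htopo w v hd.1) (hSle (hCS hvC))
          rw [Set.mem_singleton_iff] at hwX
          exact this.ne hwX
      | stepBiNC v w hr hvZ hb ih => exact absurd (ih.2 rfl) hvZ
      | stepBiC v w hr hvAn hb ih =>
        refine ⟨fun _ => ?_, fun h => by simp at h⟩
        rcases ih.1 rfl with hvD | hvC
        · exact absurd hvAn (hDAnH v hvD)
        · exact hSpoDC w ⟨v, hvC, G.bi_symm v w hb.1⟩
    rintro Y hY hYnot ⟨b, hr⟩
    have h := hinv Y b hr
    cases b with
    | true =>
      rcases h.1 rfl with hD | hC'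
      · exact hYnot (Or.inl hD)
      · exact hYnot (Or.inr (Or.inl hC'))
    | false => exact hYnot (Or.inr (h.2 rfl).1)
end

section
/- If a probability distribution P over variables V satisfies, for a DAG G with topological ordering ≺, the local conditions X ⫫ V^{≤X} \ Pa(X) ∪ {X} | Pa(X) for every vertex X, then P factorizes as P(v) = ∏_{X ∈ V} P(x | pa(X)). -/
/-- Two assignments agree on a set of variables. -/
def agreeOn {V : Type} (f g : V → ℕ) (A : Set V) : Prop := ∀ v ∈ A, f v = g v

/-- Probability of an event under a discrete distribution. -/
noncomputable def prS {V : Type} (p : PMF (V → ℕ)) (E : Set (V → ℕ)) : ENNReal :=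
  ∑' g, E.indicator (fun h => p h) g

/-- Conditional independence `A ⫫ B | S` in `p`:
`P(a,s) P(b,s) = P(a,b,s) P(s)` for every assignment. -/
def CI {V : Type} (p : PMF (V → ℕ)) (A B S : Set V) : Prop :=
  ∀ f : V → ℕ,
    prS p {g | agreeOn f g (A ∪ S)} * prS p {g | agreeOn f g (B ∪ S)} =
    prS p {g | agreeOn f g (A ∪ B ∪ S)} * prS p {g | agreeOn f g S}

/-! Ordering `V` along `≺`, the chain rule writes `P(v)` as the product over `X` of
`P(v^{≤X}) / P(v^{<X})`; the local condition at `X` says exactly that this ratio equals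
`P(x, pa(X)) / P(pa(X))`, because `Pa(X) ⊆ V^{<X}` for a topological order. When `P(pa(X)) = 0` both sides
vanish, consistent with the convention `0 / 0 = 0`. -/

open scoped ENNReal

namespace ENNReal

theorem eq_mul_div_of_mul_eq {a b c d : ℝ≥0∞} (h : a * b = c * d) (ha : a ≤ d) (hc : c ≤ d)
    (hd : d ≠ ∞) : c = b * (a / d) := by
  rcases eq_or_ne d 0 with rfl | hd₀
  · simp [nonpos_iff_eq_zero.mp ha, nonpos_iff_eq_zero.mp hc]
  · rw [← mul_div_assoc, mul_comm, ENNReal.eq_div_iff hd₀ hd, mul_comm, h]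

end ENNReal

section prS

variable {V : Type} (p : PMF (V → ℕ))

theorem prS_mono {E F : Set (V → ℕ)} (h : E ⊆ F) : prS p E ≤ prS p F :=
  ENNReal.tsum_le_tsum fun _ => Set.indicator_le_indicator_of_subset h (fun _ => zero_le) _

theorem prS_univ : prS p Set.univ = 1 := by
  simp [prS, PMF.tsum_coe]

theorem prS_ne_top (E : Set (V → ℕ)) : prS p E ≠ ∞ :=
  ne_top_of_le_ne_top ENNReal.one_ne_top (prS_univ p ▸ prS_mono p (Set.subset_univ E))

theorem setOf_agreeOn_anti (f : V → ℕ) {A B : Set V} (h : A ⊆ B) :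
    {g | agreeOn f g B} ⊆ {g | agreeOn f g A} :=
  fun _ hg v hv => hg v (h hv)

theorem CI.prS_agreeOn_union {A B S : Set V} (hCI : CI p A B S) (f : V → ℕ) :
    prS p {g | agreeOn f g (A ∪ B ∪ S)} =
      prS p {g | agreeOn f g (B ∪ S)} *
        (prS p {g | agreeOn f g (A ∪ S)} / prS p {g | agreeOn f g S}) :=
  ENNReal.eq_mul_div_of_mul_eq (hCI f)
    (prS_mono p (setOf_agreeOn_anti f Set.subset_union_right))
    (prS_mono p (setOf_agreeOn_anti f Set.subset_union_right)) (prS_ne_top p _)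

end prS

section LocalMarkov

variable {V : Type} [LinearOrder V] {G : MixedGraph V} (p : PMF (V → ℕ)) (f : V → ℕ)

theorem prS_agreeOn_Iic_eq (htopo : G.TopoOrder) {X : V}
    (hX : CI p {X} (Set.Iic X \ ({q | G.dir q X} ∪ {X})) {q | G.dir q X}) :
    prS p {g | agreeOn f g (Set.Iic X)} =
      prS p {g | agreeOn f g (Set.Iio X)} *
        (prS p {g | agreeOn f g ({X} ∪ {q | G.dir q X})} /
          prS p {g | agreeOn f g {q | G.dir q X}}) := by
  have hPa : ∀ q, G.dir q X → q < X := fun q hq => htopo q X hq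
  have hIic : {X} ∪ (Set.Iic X \ ({q | G.dir q X} ∪ {X})) ∪ {q | G.dir q X} = Set.Iic X := by
    ext v
    have := hPa v
    simp only [Set.mem_union, Set.mem_sdiff, Set.mem_singleton_iff, Set.mem_ofPred_eq,
      Set.mem_Iic]
    grind
  have hIio : (Set.Iic X \ ({q | G.dir q X} ∪ {X})) ∪ {q | G.dir q X} = Set.Iio X := by
    ext v
    have := hPa v
    simp only [Set.mem_union, Set.mem_sdiff, Set.mem_singleton_iff, Set.mem_ofPred_eq,
      Set.mem_Iic, Set.mem_Iio]
    grind
  rw [← hIic, hX.prS_agreeOn_union, hIio]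

theorem prS_agreeOn_lowerSet_eq_prod (htopo : G.TopoOrder)
    (hlocal : ∀ X : V, CI p {X} ({y | y ≤ X} \ ({q | G.dir q X} ∪ {X})) {q | G.dir q X})
    (s : Finset V) (hs : IsLowerSet (s : Set V)) :
    prS p {g | agreeOn f g s} =
      ∏ X ∈ s, prS p {g | agreeOn f g ({X} ∪ {q | G.dir q X})} /
        prS p {g | agreeOn f g {q | G.dir q X}} := by
  classical
  induction s using Finset.induction_on_max with
  | empty => simp [agreeOn, prS_univ]
  | insert X s hlt ih =>
    have hIio : (s : Set V) = Set.Iio X := by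
      ext v
      refine ⟨hlt v, fun hv => ?_⟩
      have := hs (le_of_lt hv) (Finset.mem_coe.mpr (Finset.mem_insert_self X s))
      grind
    have hIic : ((insert X s : Finset V) : Set V) = Set.Iic X := by
      rw [Finset.coe_insert, hIio, Set.insert_eq, Set.union_comm, Set.Iio_union_right]
    have hX : X ∉ s := fun h => lt_irrefl X (hlt X h)
    rw [Finset.prod_insert hX, hIic, prS_agreeOn_Iic_eq p f htopo (hlocal X), mul_comm,
      ← hIio, ih (hIio ▸ isLowerSet_Iio X)]

end LocalMarkov

theorem stmt19_general {V : Type} [Fintype V] [LinearOrder V] (G : MixedGraph V)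
    (htopo : G.TopoOrder)
    (p : PMF (V → ℕ))
    (hlocal : ∀ X : V,
      CI p {X} ({y | y ≤ X} \ ({q | G.dir q X} ∪ {X})) {q | G.dir q X}) :
    ∀ f : V → ℕ,
      prS p {g | g = f} =
        ∏ X : V,
          prS p {g | g X = f X ∧ ∀ v : V, G.dir v X → g v = f v} /
            prS p {g | ∀ v : V, G.dir v X → g v = f v} := by
  intro f
  have hall : {g | g = f} = {g | agreeOn f g (Finset.univ : Finset V)} := by
    ext g
    simp [agreeOn, funext_iff, eq_comm]
  have hfamily : ∀ X, {g | g X = f X ∧ ∀ v, G.dir v X → g v = f v} =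
      {g | agreeOn f g ({X} ∪ {q | G.dir q X})} := by
    intro X; ext g
    simp [agreeOn, or_imp, forall_and, eq_comm]
  have hparents : ∀ X, {g | ∀ v, G.dir v X → g v = f v} = {g | agreeOn f g {q | G.dir q X}} := by
    intro X; ext g
    simp [agreeOn, eq_comm]
  simp only [hall, hfamily, hparents]
  exact prS_agreeOn_lowerSet_eq_prod p f htopo hlocal _ (by simpa using isLowerSet_univ)

/-- If `P` satisfies the local conditions `X ⫫ V^{≤X} \ (Pa(X) ∪ {X}) | Pa(X)`
for every vertex `X` of a DAG, then `P` factorizes as `P(v) = ∏_X P(x | pa(X))`. -/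
theorem stmt19 {V : Type} [Fintype V] [LinearOrder V] (G : MixedGraph V)
    (hMarkov : ∀ a b : V, ¬ G.bi a b) (htopo : G.TopoOrder)
    (p : PMF (V → ℕ))
    (hlocal : ∀ X : V,
      CI p {X} ({y | y ≤ X} \ ({q | G.dir q X} ∪ {X})) {q | G.dir q X}) :
    ∀ f : V → ℕ,
      prS p {g | g = f} =
        ∏ X : V,
          prS p {g | g X = f X ∧ ∀ v : V, G.dir v X → g v = f v} /
            prS p {g | ∀ v : V, G.dir v X → g v = f v} :=
  stmt19_general G htopo p hlocal
end
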